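/- Assume λ + μ² ≠ 0. Let P, Q, R, S be a pqrs-quad that additionally satisfies the B-relations (for every w ∈ ℂ: P(w+iπ) = e^{iℓπ}·(λ+μ²)⁻¹·(μ·e^{2w}·R(w) + S(w)); Q(w+iπ) = −e^{iℓπ}·((μ·e^{2w}·P(w) + Q(w)) + μ·(λ+μ²)⁻¹·e^{2w}·(μ·e^{2w}·R(w) + S(w))); R(w+iπ) = −e^{iℓπ}·R(w); S(w+iπ) = e^{iℓπ}·((λ+μ²)·P(w) + μ·e^{2w}·R(w))), and let F be an entire function with ℋ[F] = 0. Then the square of L_B reduces to a multiple of the monodromy: for every w ∈ ℂ, L_B[L_B[F]](w) = −(λ+μ²)·e^{2iℓπ}·𝔇·F(w+2πi), where 𝔇 = P(0)·S(0) − Q(0)·R(0) is the (constant) value of the first integral. -/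

import Mathlib

/-!
Write `L_B[F](w) = m(w) · τ(w + iπ)` with `m(w) = e^{(1-ℓ)w} e^{μ(e^w + e^{-w})}`,
`τ = S F + e^w R F'`, and put `σ = Q F + e^w P F'`. The quad system together with the Heun
equation closes up on these pairings: `e^x τ' = ((ℓ-1)e^x - μ) τ - (λ+μ²) σ`. Hence
`L_B[L_B[F]](w)` is `m(w) m(w+iπ)` times a combination of `τ` and `σ` at `w + 2πi` whose
coefficients are `R, S` at `w + iπ`. The B-relations turn these coefficients into
`-e^{iℓπ} R(w)` and `e^{iℓπ}(λ+μ²) P(w)`, and, applied twice, show that `P, Q, R, S` are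
multiplied by `e^{2iℓπ}` under `w ↦ w + 2πi`. Then the `F'` terms cancel, the `F` term carries
`P S - Q R`, and `m(w) m(w+iπ) = -e^{2(1-ℓ)w} e^{-iℓπ}` (the `μ`-factors cancel as
`e^{w+iπ} = -e^w`), which produces the first integral `𝔇`.
-/

noncomputable def ipi : ℂ := (Real.pi : ℂ) * Complex.I

noncomputable def heunOp (ell lam mu : ℂ) (F : ℂ → ℂ) : ℂ → ℂ := fun w =>
  deriv (deriv F) w + (ell + mu * (Complex.exp (-w) - Complex.exp w)) * deriv F w +
    (lam - (ell + 1) * mu * Complex.exp w) * F w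

noncomputable def opLB (ell mu : ℂ) (R S : ℂ → ℂ) (F : ℂ → ℂ) : ℂ → ℂ := fun w =>
  Complex.exp ((1 - ell) * w) * Complex.exp (mu * (Complex.exp w + Complex.exp (-w))) *
    (S (w + ipi) * F (w + ipi) - Complex.exp w * R (w + ipi) * deriv F (w + ipi))

open Complex

structure IsPqrsQuad (ell lam mu : ℂ) (P Q R S : ℂ → ℂ) : Prop where
  differentiable_P : Differentiable ℂ P
  differentiable_Q : Differentiable ℂ Q
  differentiable_R : Differentiable ℂ R
  differentiable_S : Differentiable ℂ S
  exp_mul_deriv_P : ∀ w : ℂ, exp w * deriv P w =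
    (mu + (ell - 1) * exp w) * P w - Q w + exp (2 * w) * R w
  deriv_Q : ∀ w : ℂ, deriv Q w =
    exp w * ((lam - (ell + 1) * mu * exp w) * P w + mu * Q w + S w)
  exp_mul_deriv_R : ∀ w : ℂ, exp w * deriv R w =
    -(lam + mu ^ 2) * P w + exp w * (2 * (ell - 1) - mu * exp w) * R w - S w
  exp_mul_deriv_S : ∀ w : ℂ, exp w * deriv S w =
    -(lam + mu ^ 2) * Q w + exp (2 * w) * (lam - (ell + 1) * mu * exp w) * R w
      + ((ell - 1) * exp w - mu) * S w

def HasBRelations (ell lam mu : ℂ) (P Q R S : ℂ → ℂ) : Prop :=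
  ∀ w : ℂ,
    P (w + ipi) = exp (I * ell * (Real.pi : ℂ)) * (lam + mu ^ 2)⁻¹ *
      (mu * exp (2 * w) * R w + S w) ∧
    Q (w + ipi) = -exp (I * ell * (Real.pi : ℂ)) *
      ((mu * exp (2 * w) * P w + Q w) +
        mu * (lam + mu ^ 2)⁻¹ * exp (2 * w) * (mu * exp (2 * w) * R w + S w)) ∧
    R (w + ipi) = -exp (I * ell * (Real.pi : ℂ)) * R w ∧
    S (w + ipi) = exp (I * ell * (Real.pi : ℂ)) * ((lam + mu ^ 2) * P w + mu * exp (2 * w) * R w)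

noncomputable def lbWeight (ell mu w : ℂ) : ℂ :=
  exp ((1 - ell) * w) * exp (mu * (exp w + exp (-w)))

noncomputable def quadPairing (A B F : ℂ → ℂ) (x : ℂ) : ℂ :=
  B x * F x + exp x * A x * deriv F x

lemma exp_add_ipi (z : ℂ) : exp (z + ipi) = -exp z :=
  exp_add_pi_mul_I z

lemma exp_two_mul_eq_sq (w : ℂ) : exp (2 * w) = exp w ^ 2 := by
  rw [two_mul, exp_add, sq]

lemma lbWeight_mul_lbWeight_add_ipi (ell mu w : ℂ) :
    lbWeight ell mu w * lbWeight ell mu (w + ipi) =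
      -(exp (2 * (1 - ell) * w) * (exp (I * ell * (Real.pi : ℂ)))⁻¹) := by
  have hneg : exp (-(w + ipi)) = -exp (-w) := by rw [exp_neg, exp_add_ipi, exp_neg, inv_neg]
  have hmu : exp (mu * (exp w + exp (-w))) * exp (mu * (exp (w + ipi) + exp (-(w + ipi)))) = 1 := by
    rw [exp_add_ipi, hneg, ← exp_add, ← exp_zero]
    congr 1
    ring
  have hell : exp ((1 - ell) * w) * exp ((1 - ell) * (w + ipi)) =
      -(exp (2 * (1 - ell) * w) * (exp (I * ell * (Real.pi : ℂ)))⁻¹) := by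
    rw [← exp_add, ← exp_neg, ← exp_add, ← exp_add_ipi]
    congr 1
    unfold ipi
    ring
  calc lbWeight ell mu w * lbWeight ell mu (w + ipi)
      = exp ((1 - ell) * w) * exp ((1 - ell) * (w + ipi)) *
          (exp (mu * (exp w + exp (-w))) * exp (mu * (exp (w + ipi) + exp (-(w + ipi))))) := by
        unfold lbWeight; ring
    _ = _ := by rw [hell, hmu, mul_one]

lemma hasDerivAt_lbWeight (ell mu w : ℂ) :
    HasDerivAt (lbWeight ell mu)
      (lbWeight ell mu w * ((1 - ell) + mu * (exp w - exp (-w)))) w := by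
  have hell : HasDerivAt (fun y => (1 - ell) * y) (1 - ell) w := by
    simpa using (hasDerivAt_id' w).const_mul (1 - ell)
  have hmu : HasDerivAt (fun y => mu * (exp y + exp (-y))) (mu * (exp w - exp (-w))) w :=
    (((hasDerivAt_id' w).cexp.add (hasDerivAt_neg' w).cexp).const_mul mu).congr_deriv
      (by ring)
  exact (hell.cexp.mul hmu.cexp).congr_deriv (by unfold lbWeight; ring)

lemma opLB_eq_lbWeight_mul (ell mu : ℂ) (R S F : ℂ → ℂ) (w : ℂ) :
    opLB ell mu R S F w = lbWeight ell mu w * quadPairing R S F (w + ipi) := by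
  simp only [opLB, lbWeight, quadPairing, exp_add_ipi]
  ring

lemma differentiable_quadPairing {A B F : ℂ → ℂ} (hA : Differentiable ℂ A)
    (hB : Differentiable ℂ B) (hF : Differentiable ℂ F) :
    Differentiable ℂ (quadPairing A B F) :=
  (hB.mul hF).add ((differentiable_exp.mul hA).mul hF.deriv)

lemma hasDerivAt_quadPairing {A B F : ℂ → ℂ} (hA : Differentiable ℂ A)
    (hB : Differentiable ℂ B) (hF : Differentiable ℂ F) (x : ℂ) :
    HasDerivAt (quadPairing A B F)
      (deriv B x * F x + B x * deriv F x +
        (exp x * A x + exp x * deriv A x) * deriv F x + exp x * A x * deriv (deriv F) x) x :=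
  (((hB x).hasDerivAt.mul (hF x).hasDerivAt).add
    (((hasDerivAt_exp x).mul (hA x).hasDerivAt).mul (hF.deriv x).hasDerivAt)).congr_deriv
    (by simp only [Pi.mul_apply]; ring)

namespace IsPqrsQuad

variable {ell lam mu : ℂ} {P Q R S F : ℂ → ℂ}

lemma exp_mul_deriv_quadPairing (hq : IsPqrsQuad ell lam mu P Q R S)
    (hF : Differentiable ℂ F) (hHeun : ∀ w : ℂ, heunOp ell lam mu F w = 0) (x : ℂ) :
    exp x * deriv (quadPairing R S F) x =
      ((ell - 1) * exp x - mu) * quadPairing R S F x - (lam + mu ^ 2) * quadPairing P Q F x := by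
  rw [(hasDerivAt_quadPairing hq.differentiable_R hq.differentiable_S hF x).deriv]
  have hR := hq.exp_mul_deriv_R x
  have hS := hq.exp_mul_deriv_S x
  have hHeun_x := hHeun x
  rw [exp_two_mul_eq_sq] at hS
  unfold heunOp at hHeun_x
  have hinv : exp (-x) * exp x = 1 := by rw [← exp_add, neg_add_cancel, exp_zero]
  unfold quadPairing
  linear_combination F x * hS + exp x * deriv F x * hR + exp x ^ 2 * R x * hHeun_x
    - mu * exp x * R x * deriv F x * hinv

lemma opLB_opLB (hq : IsPqrsQuad ell lam mu P Q R S)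
    (hF : Differentiable ℂ F) (hHeun : ∀ w : ℂ, heunOp ell lam mu F w = 0) (w : ℂ) :
    opLB ell mu R S (opLB ell mu R S F) w =
      lbWeight ell mu w * lbWeight ell mu (w + ipi) *
        ((S (w + ipi) + mu * exp (2 * w) * R (w + ipi)) * quadPairing R S F (w + ipi + ipi) +
          (lam + mu ^ 2) * R (w + ipi) * quadPairing P Q F (w + ipi + ipi)) := by
  have hG : opLB ell mu R S F = fun z => lbWeight ell mu z * quadPairing R S F (z + ipi) :=
    funext (opLB_eq_lbWeight_mul ell mu R S F)
  have hτ := differentiable_quadPairing hq.differentiable_R hq.differentiable_S hF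
  have hG' : deriv (opLB ell mu R S F) (w + ipi) =
      lbWeight ell mu (w + ipi) * ((1 - ell) + mu * (exp (w + ipi) - exp (-(w + ipi)))) *
          quadPairing R S F (w + ipi + ipi) +
        lbWeight ell mu (w + ipi) * deriv (quadPairing R S F) (w + ipi + ipi) := by
    rw [hG]
    exact ((hasDerivAt_lbWeight ell mu (w + ipi)).mul
      ((hτ (w + ipi + ipi)).hasDerivAt.comp_add_const (w + ipi) ipi)).deriv
  have hτ' := hq.exp_mul_deriv_quadPairing hF hHeun (w + ipi + ipi)
  have hexp : exp (w + ipi + ipi) = exp w := by rw [exp_add_ipi, exp_add_ipi, neg_neg]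
  have hneg : exp (-(w + ipi)) = -exp (-w) := by rw [exp_neg, exp_add_ipi, exp_neg, inv_neg]
  have hinv : exp (-w) * exp w = 1 := by rw [← exp_add, neg_add_cancel, exp_zero]
  rw [hexp] at hτ'
  rw [opLB_eq_lbWeight_mul, quadPairing, hG', opLB_eq_lbWeight_mul, exp_add_ipi, hneg,
    exp_two_mul_eq_sq]
  linear_combination -(lbWeight ell mu w * lbWeight ell mu (w + ipi) * R (w + ipi)) * hτ'
    - mu * lbWeight ell mu w * lbWeight ell mu (w + ipi) * R (w + ipi) *
      quadPairing R S F (w + ipi + ipi) * hinv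

lemma firstIntegral_eq (hq : IsPqrsQuad ell lam mu P Q R S) (w : ℂ) :
    exp (2 * (1 - ell) * w) * (P w * S w - Q w * R w) = P 0 * S 0 - Q 0 * R 0 := by
  have hc : ∀ y, HasDerivAt (fun y => 2 * (1 - ell) * y) (2 * (1 - ell)) y := fun y => by
    simpa using (hasDerivAt_id' y).const_mul (2 * (1 - ell))
  have hD : ∀ y, HasDerivAt (fun y => exp (2 * (1 - ell) * y) * (P y * S y - Q y * R y))
      (exp (2 * (1 - ell) * y) * (2 * (1 - ell)) * (P y * S y - Q y * R y) +
        exp (2 * (1 - ell) * y) * (deriv P y * S y + P y * deriv S y -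
          (deriv Q y * R y + Q y * deriv R y))) y := fun y =>
    (hc y).cexp.mul
      (((hq.differentiable_P y).hasDerivAt.mul (hq.differentiable_S y).hasDerivAt).sub
        ((hq.differentiable_Q y).hasDerivAt.mul (hq.differentiable_R y).hasDerivAt))
  have hD_zero :
      ∀ y, deriv (fun y => exp (2 * (1 - ell) * y) * (P y * S y - Q y * R y)) y = 0 := by
    intro y
    have hP' := hq.exp_mul_deriv_P y
    have hS' := hq.exp_mul_deriv_S y
    rw [exp_two_mul_eq_sq] at hP' hS'
    refine (mul_eq_zero.mp ?_).resolve_left (exp_ne_zero y)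
    rw [(hD y).deriv]
    linear_combination exp (2 * (1 - ell) * y) *
      (S y * hP' + P y * hS' - exp y * R y * hq.deriv_Q y - Q y * hq.exp_mul_deriv_R y)
  simpa using is_const_of_deriv_eq_zero (fun y => (hD y).differentiableAt) hD_zero w 0

end IsPqrsQuad

lemma HasBRelations.add_ipi_add_ipi {ell lam mu : ℂ} {P Q R S : ℂ → ℂ}
    (hne : lam + mu ^ 2 ≠ 0) (hB : HasBRelations ell lam mu P Q R S) (w : ℂ) :
    P (w + ipi + ipi) = exp (I * ell * (Real.pi : ℂ)) ^ 2 * P w ∧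
    Q (w + ipi + ipi) = exp (I * ell * (Real.pi : ℂ)) ^ 2 * Q w ∧
    R (w + ipi + ipi) = exp (I * ell * (Real.pi : ℂ)) ^ 2 * R w ∧
    S (w + ipi + ipi) = exp (I * ell * (Real.pi : ℂ)) ^ 2 * S w := by
  obtain ⟨hP1, hQ1, hR1, hS1⟩ := hB w
  obtain ⟨hP2, hQ2, hR2, hS2⟩ := hB (w + ipi)
  have hexp : exp (2 * (w + ipi)) = exp (2 * w) := by
    rw [exp_two_mul_eq_sq, exp_two_mul_eq_sq, exp_add_ipi, neg_sq]
  rw [hexp] at hP2 hQ2 hS2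
  refine ⟨?_, ?_, ?_, ?_⟩
  · rw [hP2, hR1, hS1]
    field_simp
    ring
  · rw [hQ2, hP1, hQ1, hR1, hS1]
    field_simp
    ring
  · rw [hR2, hR1]
    ring
  · rw [hS2, hP1, hR1]
    field_simp
    ring

theorem statement_11 (ell lam mu : ℂ) (hne : lam + mu ^ 2 ≠ 0) (P Q R S : ℂ → ℂ)
    (hP : Differentiable ℂ P) (hQ : Differentiable ℂ Q)
    (hR : Differentiable ℂ R) (hS : Differentiable ℂ S)
    (hsys1 : ∀ w : ℂ, Complex.exp w * deriv P w =
      (mu + (ell - 1) * Complex.exp w) * P w - Q w + Complex.exp (2 * w) * R w)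
    (hsys2 : ∀ w : ℂ, deriv Q w =
      Complex.exp w * ((lam - (ell + 1) * mu * Complex.exp w) * P w + mu * Q w + S w))
    (hsys3 : ∀ w : ℂ, Complex.exp w * deriv R w =
      -(lam + mu ^ 2) * P w + Complex.exp w * (2 * (ell - 1) - mu * Complex.exp w) * R w - S w)
    (hsys4 : ∀ w : ℂ, Complex.exp w * deriv S w =
      -(lam + mu ^ 2) * Q w + Complex.exp (2 * w) * (lam - (ell + 1) * mu * Complex.exp w) * R w
        + ((ell - 1) * Complex.exp w - mu) * S w)
    (hB : ∀ w : ℂ,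
      P (w + ipi) = Complex.exp (Complex.I * ell * (Real.pi : ℂ)) * (lam + mu ^ 2)⁻¹ *
        (mu * Complex.exp (2 * w) * R w + S w) ∧
      Q (w + ipi) = -Complex.exp (Complex.I * ell * (Real.pi : ℂ)) *
        ((mu * Complex.exp (2 * w) * P w + Q w) +
          mu * (lam + mu ^ 2)⁻¹ * Complex.exp (2 * w) *
            (mu * Complex.exp (2 * w) * R w + S w)) ∧
      R (w + ipi) = -Complex.exp (Complex.I * ell * (Real.pi : ℂ)) * R w ∧
      S (w + ipi) = Complex.exp (Complex.I * ell * (Real.pi : ℂ)) * ((lam + mu ^ 2) * P w + mu * Complex.exp (2 * w) * R w))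
    (F : ℂ → ℂ) (hF : Differentiable ℂ F)
    (hHeun : ∀ w : ℂ, heunOp ell lam mu F w = 0) :
    ∀ w : ℂ,
      opLB ell mu R S (opLB ell mu R S F) w =
        -(lam + mu ^ 2) * Complex.exp (2 * Complex.I * ell * (Real.pi : ℂ)) * (P 0 * S 0 - Q 0 * R 0) * F (w + 2 * ipi) := by
  have hq : IsPqrsQuad ell lam mu P Q R S := ⟨hP, hQ, hR, hS, hsys1, hsys2, hsys3, hsys4⟩
  intro w
  obtain ⟨-, -, hR1, hS1⟩ := hB w
  obtain ⟨hP2, hQ2, hR2, hS2⟩ := HasBRelations.add_ipi_add_ipi hne hB w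
  have hε : exp (2 * I * ell * (Real.pi : ℂ)) = exp (I * ell * (Real.pi : ℂ)) ^ 2 := by
    rw [← exp_nat_mul]; push_cast; ring_nf
  rw [show w + 2 * ipi = w + ipi + ipi by ring, hq.opLB_opLB hF hHeun,
    lbWeight_mul_lbWeight_add_ipi, hR1, hS1, quadPairing, quadPairing, hP2, hQ2, hR2, hS2, hε,
    ← hq.firstIntegral_eq w]
  field_simp [exp_ne_zero]
  ring
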